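/- arXiv:2108.12872 — 2 statements merged into one kernel-verified Lean document; each statement's English description precedes it below -/
import Mathlib

section
/- Submultiplicativity of the control parameters: let q be a positive integer and A, B, d, ε > 0 with A ≤ 1 and B ε^q ≤ 1. For 0 ≤ k ≤ q define Φ_k = A d^{−k} + B ε^{q−k}, and assume Φ_j ≤ ε^{−j} for all 0 ≤ j ≤ q. Then for all nonnegative integers k, k′ with k + k′ ≤ q, Φ_k · Φ_{k′} ≤ 4 Φ_{k+k′}. -/
/-! Expanding `Φ_k Φ_{k'}` gives four terms, each bounded by one of the two summands of
`Φ_{k+k'}`: `A² ≤ A` for the `d`-term, `B ε^q ≤ 1` for the `ε`-term, and the bound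
`A d^{-k} ≤ Φ_k ≤ ε^{-k}` for the two mixed terms. -/

lemma add_mul_add_le_of_le {a b a' b' X Y : ℝ} (h₁ : a * a' ≤ X) (h₂ : a * b' ≤ Y)
    (h₃ : b * a' ≤ Y) (h₄ : b * b' ≤ Y) : (a + b) * (a' + b') ≤ X + 3 * Y := by
  have hexpand : (a + b) * (a' + b') = a * a' + a * b' + b * a' + b * b' := by ring
  linarith

lemma div_pow_mul_div_pow_le {A d : ℝ} (hA₀ : 0 ≤ A) (hA₁ : A ≤ 1) (hd : 0 ≤ d) (k k' : ℕ) :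
    A / d ^ k * (A / d ^ k') ≤ A / d ^ (k + k') := by
  rw [div_mul_div_comm, ← pow_add]
  gcongr
  exact mul_le_of_le_one_left hA₀ hA₁

lemma pow_sub_eq_pow_mul_pow_sub {ε : ℝ} {k k' q : ℕ} (h : k + k' ≤ q) :
    ε ^ (q - k') = ε ^ k * ε ^ (q - (k + k')) := by
  rw [← pow_add]
  congr 1
  omega

lemma mul_mul_pow_sub_le_of_le_one_div_pow {x B ε : ℝ} {k k' q : ℕ} (hx : x ≤ 1 / ε ^ k)
    (hB : 0 ≤ B) (hε : 0 < ε) (h : k + k' ≤ q) :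
    x * (B * ε ^ (q - k')) ≤ B * ε ^ (q - (k + k')) :=
  calc x * (B * ε ^ (q - k')) ≤ 1 / ε ^ k * (B * ε ^ (q - k')) := by gcongr
    _ = B * ε ^ (q - (k + k')) := by
      rw [pow_sub_eq_pow_mul_pow_sub h]
      field_simp

lemma mul_pow_sub_mul_mul_pow_sub_le {B ε : ℝ} {k k' q : ℕ} (hB : 0 ≤ B) (hε : 0 ≤ ε)
    (hBq : B * ε ^ q ≤ 1) (h : k + k' ≤ q) :
    B * ε ^ (q - k) * (B * ε ^ (q - k')) ≤ B * ε ^ (q - (k + k')) :=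
  calc B * ε ^ (q - k) * (B * ε ^ (q - k')) = B * ε ^ q * (B * ε ^ (q - (k + k'))) := by
        rw [mul_mul_mul_comm, ← pow_add, show q - k + (q - k') = q + (q - (k + k')) by omega,
          pow_add]
        ring
    _ ≤ B * ε ^ (q - (k + k')) := mul_le_of_le_one_left (by positivity) hBq

theorem control_parameter_submultiplicative_general (q : ℕ)
    (A B d ε : ℝ) (hA : 0 < A) (hB : 0 < B) (hd : 0 < d) (hε : 0 < ε)
    (hA1 : A ≤ 1) (hBq : B * ε ^ q ≤ 1)
    (hΦ : ∀ j ≤ q, A / d ^ j + B * ε ^ (q - j) ≤ 1 / ε ^ j) :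
    ∀ k k' : ℕ, k + k' ≤ q →
      (A / d ^ k + B * ε ^ (q - k)) * (A / d ^ k' + B * ε ^ (q - k')) ≤
        4 * (A / d ^ (k + k') + B * ε ^ (q - (k + k'))) := by
  intro k k' hkk'
  have hA_le : ∀ j ≤ q, A / d ^ j ≤ 1 / ε ^ j := fun j hj => by
    have := hΦ j hj
    have : 0 < B * ε ^ (q - j) := by positivity
    linarith
  have hmixed : A / d ^ k * (B * ε ^ (q - k')) ≤ B * ε ^ (q - (k + k')) :=
    mul_mul_pow_sub_le_of_le_one_div_pow (hA_le k (by omega)) hB.le hε hkk'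
  have hmixed' : B * ε ^ (q - k) * (A / d ^ k') ≤ B * ε ^ (q - (k + k')) := by
    rw [mul_comm, add_comm k k']
    exact mul_mul_pow_sub_le_of_le_one_div_pow (hA_le k' (by omega)) hB.le hε (by omega)
  have hexpand := add_mul_add_le_of_le (div_pow_mul_div_pow_le hA.le hA1 hd.le k k') hmixed
    hmixed' (mul_pow_sub_mul_mul_pow_sub_le hB.le hε.le hBq hkk')
  have hX : 0 ≤ A / d ^ (k + k') := by positivity
  have hY : 0 ≤ B * ε ^ (q - (k + k')) := by positivity
  linarith

/-- Submultiplicativity of the control parameters `Φ_k = A d^{−k} + B ε^{q−k}`: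
under `A ≤ 1`, `B ε^q ≤ 1` and `Φ_j ≤ ε^{−j}` for `j ≤ q`, one has
`Φ_k Φ_{k′} ≤ 4 Φ_{k+k′}` whenever `k + k′ ≤ q`. -/
theorem control_parameter_submultiplicative (q : ℕ) (hq : 0 < q)
    (A B d ε : ℝ) (hA : 0 < A) (hB : 0 < B) (hd : 0 < d) (hε : 0 < ε)
    (hA1 : A ≤ 1) (hBq : B * ε ^ q ≤ 1)
    (hΦ : ∀ j ≤ q, A / d ^ j + B * ε ^ (q - j) ≤ 1 / ε ^ j) :
    ∀ k k' : ℕ, k + k' ≤ q →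
      (A / d ^ k + B * ε ^ (q - k)) * (A / d ^ k' + B * ε ^ (q - k')) ≤
        4 * (A / d ^ (k + k') + B * ε ^ (q - (k + k'))) :=
  control_parameter_submultiplicative_general q A B d ε hA hB hd hε hA1 hBq hΦ
end

section
/- Partial fraction decomposition with nonpositive residues: let n ≥ 1, let x₁ < x₂ < … < x_m be reals with x_{i+1} − x_i ≥ 1/n for all i, and let e₁, …, e_m ∈ {0, 1}. Then, as an identity of rational functions, ∏ᵢ₌₁^m (z − xᵢ − eᵢ/n)/(z − xᵢ) = 1 + Σᵢ₌₁^m Rᵢ/(z − xᵢ), where Rᵢ = −(eᵢ/n) ∏_{j ≠ i} (xᵢ − x_j − e_j/n)/(xᵢ − x_j), and moreover Rᵢ ≤ 0 for every i. -/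
open Finset Polynomial Lagrange

/-!
With `cᵢ = eᵢ/n`, the product is `P(z) / Q(z)` with `P = ∏ (X - xᵢ - cᵢ)` and `Q = ∏ (X - xᵢ)`
monic of the same degree, so it equals `1 + (P - Q)(z) / Q(z)` with `deg (P - Q) < m`. Lagrange
interpolation of `P - Q` at the distinct nodes `xᵢ` splits this into simple fractions with
residues `P(xᵢ) / ∏_{j ≠ i} (xᵢ - xⱼ)`, which is `Rᵢ`. For the sign, every factor of `Rᵢ` other than
`-cᵢ` has the form `(a - c) / a` with `0 ≤ c ≤ 1/n ≤ |a|`, hence is nonnegative.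
-/

theorem Fin.add_le_of_lt_of_le_sub_succ {α : Type*} [AddCommGroup α] [LinearOrder α]
    [IsOrderedAddMonoid α] {m : ℕ} {x : Fin m → α} {d : α} (hd : 0 ≤ d)
    (hgap : ∀ (i : Fin m) (hi : (i : ℕ) + 1 < m), d ≤ x ⟨(i : ℕ) + 1, hi⟩ - x i)
    {a b : Fin m} (hab : a < b) : x a + d ≤ x b := by
  obtain ⟨a, ha⟩ := a
  obtain ⟨b, hb⟩ := b
  rw [Fin.mk_lt_mk] at hab
  induction b, hab using Nat.le_induction with
  | base => exact le_sub_iff_add_le'.mp (hgap ⟨a, ha⟩ hb)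
  | succ b hab ih =>
    calc x ⟨a, ha⟩ + d ≤ x ⟨b, by omega⟩ := ih (by omega)
      _ ≤ x ⟨b, by omega⟩ + d := le_add_of_nonneg_right hd
      _ ≤ x ⟨b + 1, hb⟩ := le_sub_iff_add_le'.mp (hgap ⟨b, by omega⟩ hb)

theorem Fin.le_abs_sub_of_ne_of_le_sub_succ {α : Type*} [AddCommGroup α] [LinearOrder α]
    [IsOrderedAddMonoid α] {m : ℕ} {x : Fin m → α} {d : α} (hd : 0 ≤ d)
    (hgap : ∀ (i : Fin m) (hi : (i : ℕ) + 1 < m), d ≤ x ⟨(i : ℕ) + 1, hi⟩ - x i)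
    {a b : Fin m} (hab : a ≠ b) : d ≤ |x a - x b| := by
  have hlt {a b : Fin m} (hab : a < b) : d ≤ x b - x a :=
    le_sub_iff_add_le'.mpr (Fin.add_le_of_lt_of_le_sub_succ hd hgap hab)
  rcases hab.lt_or_gt with h | h
  · exact (hlt h).trans (abs_sub_comm (x a) (x b) ▸ le_abs_self _)
  · exact (hlt h).trans (le_abs_self _)

theorem sub_div_self_nonneg {K : Type*} [Field K] [LinearOrder K] [IsStrictOrderedRing K]
    {a c : K} (hc : 0 ≤ c) (hca : c ≤ |a|) : 0 ≤ (a - c) / a := by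
  rcases le_or_gt 0 a with ha | ha
  · rw [abs_of_nonneg ha] at hca
    exact div_nonneg (sub_nonneg.mpr hca) ha
  · exact div_nonneg_of_nonpos (by linarith) ha.le

theorem Lagrange.eval_div_eval_nodal {F ι : Type*} [Field F] [DecidableEq ι] {s : Finset ι}
    {v : ι → F} (hvs : Set.InjOn v s) {f : F[X]} (hf : f.degree < #s) {z : F}
    (hz : ∀ i ∈ s, z ≠ v i) :
    f.eval z / (nodal s v).eval z = ∑ i ∈ s, nodalWeight s v i * f.eval (v i) / (z - v i) := by
  conv_lhs => rw [eq_interpolate hvs hf, eval_interpolate_not_at_node _ hz,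
    mul_div_cancel_left₀ _ (eval_nodal_not_at_node hz)]
  exact sum_congr rfl fun i _ => by ring

theorem Lagrange.degree_nodal_sub_nodal_lt {R ι : Type*} [CommRing R] [Nontrivial R]
    (s : Finset ι) (v w : ι → R) : (nodal s w - nodal s v).degree < #s := by
  rw [← degree_nodal (s := s) (v := w)]
  exact degree_sub_lt_left (by rw [degree_nodal, degree_nodal]) nodal_ne_zero
    (by rw [nodal_monic.leadingCoeff, nodal_monic.leadingCoeff])

theorem prod_sub_sub_div_sub_eq_one_add_sum {K ι : Type*} [Field K] [DecidableEq ι]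
    {s : Finset ι} {x : ι → K} (hx : Set.InjOn x s) (c : ι → K) {z : K}
    (hz : ∀ i ∈ s, z ≠ x i) :
    ∏ i ∈ s, (z - x i - c i) / (z - x i) =
      1 + ∑ i ∈ s, (-c i * ∏ j ∈ s.erase i, (x i - x j - c j) / (x i - x j)) / (z - x i) := by
  have hQ : (nodal s x).eval z ≠ 0 := eval_nodal_not_at_node hz
  have residue : ∀ i ∈ s, nodalWeight s x i * (nodal s (x + c) - nodal s x).eval (x i) =
      -c i * ∏ j ∈ s.erase i, (x i - x j - c j) / (x i - x j) := fun i hi => by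
    rw [eval_sub, eval_nodal_at_node hi, sub_zero, eval_nodal, ← mul_prod_erase s _ hi,
      nodalWeight]
    simp only [Pi.add_apply, sub_add_eq_sub_sub, div_eq_mul_inv, prod_mul_distrib]
    ring
  calc ∏ i ∈ s, (z - x i - c i) / (z - x i)
      = (nodal s (x + c)).eval z / (nodal s x).eval z := by
        simp only [eval_nodal, Pi.add_apply, sub_add_eq_sub_sub, prod_div_distrib]
    _ = 1 + (nodal s (x + c) - nodal s x).eval z / (nodal s x).eval z := by
        rw [eval_sub, sub_div, div_self hQ, add_sub_cancel]
    _ = _ := by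
        rw [eval_div_eval_nodal hx (degree_nodal_sub_nodal_lt s x (x + c)) hz]
        exact congrArg _ (sum_congr rfl fun i hi => by rw [residue i hi])

/-- Partial fraction decomposition with nonpositive residues for the jump factor of
non-intersecting Bernoulli walkers: with particles separated by at least `1/n` and
`e ∈ {0,1}^m`, one has `∏ᵢ (z − xᵢ − eᵢ/n)/(z − xᵢ) = 1 + Σᵢ Rᵢ/(z − xᵢ)` where
`Rᵢ = −(eᵢ/n) ∏_{j ≠ i} (xᵢ − x_j − e_j/n)/(xᵢ − x_j) ≤ 0`. -/
theorem bernoulli_jump_partial_fraction (n : ℕ) (hn : 1 ≤ n) (m : ℕ)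
    (x e : Fin m → ℝ) (he : ∀ i, e i = 0 ∨ e i = 1)
    (hgap : ∀ (i : Fin m) (hi : (i : ℕ) + 1 < m), 1 / (n : ℝ) ≤ x ⟨(i : ℕ) + 1, hi⟩ - x i) :
    (∀ z : ℂ, (∀ i, z ≠ (x i : ℂ)) →
      ∏ i, (z - (x i : ℂ) - ((e i / n : ℝ) : ℂ)) / (z - (x i : ℂ)) =
        1 + ∑ i, ((-(e i / n) *
            ∏ j ∈ Finset.univ.erase i, (x i - x j - e j / n) / (x i - x j) : ℝ) : ℂ)
          / (z - (x i : ℂ))) ∧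
    ∀ i : Fin m,
      -(e i / n) * ∏ j ∈ Finset.univ.erase i, (x i - x j - e j / n) / (x i - x j) ≤ 0 := by
  have hstep : (0 : ℝ) < 1 / n := by positivity
  have hsep {i j : Fin m} (hij : i ≠ j) : 1 / (n : ℝ) ≤ |x i - x j| :=
    Fin.le_abs_sub_of_ne_of_le_sub_succ hstep.le hgap hij
  have hjump (j : Fin m) : 0 ≤ e j / n ∧ e j / n ≤ 1 / n := by
    rcases he j with h | h <;> simp [h]
  refine ⟨fun z hz => ?_, fun i => ?_⟩
  · have hinj : Function.Injective fun i => (x i : ℂ) := fun i j hxij => by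
      by_contra hij
      have hsep' := hsep hij
      rw [Complex.ofReal_injective hxij, sub_self, abs_zero] at hsep'
      exact hstep.not_ge hsep'
    exact_mod_cast prod_sub_sub_div_sub_eq_one_add_sum (s := univ) hinj.injOn
      (fun i => ((e i / n : ℝ) : ℂ)) (fun i _ => hz i)
  · refine mul_nonpos_of_nonpos_of_nonneg (neg_nonpos.mpr (hjump i).1)
      (prod_nonneg fun j hj => sub_div_self_nonneg (hjump j).1 ((hjump j).2.trans ?_))
    exact hsep (ne_of_mem_erase hj).symm
end
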